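/- Fix a positive integer N, real parameters λ > 0, α > 0 and a with λa > −1, and 0 ≤ p ≤ N. Let I_p^{(λ₁,λ₂)}(x) = (p!(N−p)!/N!) ∫_{(0,1)^N} ∏_{l=1}^N t_l^{λ₁}(1 − t_l)^{λ₂} |x − t_l|^{α−1} ∏_{1≤j<k≤N} |t_k − t_j|^{2λ} e_p(x − t_1, …, x − t_N) dt_1⋯dt_N denote the Jacobi auxiliary integral, and let L_p(x) = (p!(N−p)!/N!) ∫_{(0,∞)^N} ∏_{l=1}^N t_l^{λa} e^{−λ t_l} |x − t_l|^{α−1} ∏_{1≤j<k≤N} |t_k − t_j|^{2λ} e_p(x − t_1, …, x − t_N) dt_1⋯dt_N denote the Laguerre auxiliary integral (weight t^{aβ/2} e^{−βt/2} with β = 2λ). Then for every x > 0, L_p(x) = lim_{n→∞} n^{N(λa + α) + λN(N−1) + p} I_p^{(λa, λn)}( x/n ). -/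

import Mathlib

/-!
Substituting `t = s / n` turns `I_p^{(λa, λn)}(x / n)` into an integral over `(0, n)^N` whose
integrand is that of `L_p(x)` with the weight `e^{-λ s}` replaced by `(1 - s / n)^{λ n}`: the
integrand is homogeneous in `(x, t)`, and the power of `n` in the statement is exactly the one
this substitution produces. Since `(1 - s / n)^{λ n} ≤ e^{-λ s}` and `|t_j - t_k|`, `|e_p|` are
bounded by products of `1 + |t_l|`, the rescaled integrands are dominated by a product of
integrable one-variable functions, and dominated convergence gives the limit.
-/

open MeasureTheory Filter Finset

noncomputable section

/-- Vandermonde-type product `∏_{j<k} |t k - t j| ^ γ`. -/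
def vdm (n : ℕ) (γ : ℝ) (t : Fin n → ℝ) : ℝ :=
  ∏ p ∈ Finset.univ.filter (fun p : Fin n × Fin n => p.1 < p.2), |t p.2 - t p.1| ^ γ

/-- The elementary symmetric polynomial `e_p(t_1, …, t_n)`. -/
def esym (n : ℕ) (p : ℕ) (t : Fin n → ℝ) : ℝ :=
  ∑ s ∈ Finset.univ.powersetCard p, ∏ j ∈ s, t j

/-- The unit cube `(0,1)^n`. -/
def unitCube (n : ℕ) : Set (Fin n → ℝ) := Set.univ.pi fun _ => Set.Ioo (0 : ℝ) 1

/-- The positive orthant `(0, ∞)^n`. -/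
def posOrthant (n : ℕ) : Set (Fin n → ℝ) := Set.univ.pi fun _ => Set.Ioi (0 : ℝ)

/-- The Jacobi auxiliary Selberg-type integral `I_p^{(λ₁,λ₂)}(x)` with weight
`t^{λ₁}(1-t)^{λ₂}` on `(0,1)`, Vandermonde exponent `2λ` and parameter `α`. -/
def Jaux (N : ℕ) (lam α lam₁ lam₂ : ℝ) (p : ℕ) (x : ℝ) : ℝ :=
  ((p.factorial : ℝ) * ((N - p).factorial : ℝ) / (N.factorial : ℝ)) *
    ∫ t in unitCube N,
      (∏ l, t l ^ lam₁ * (1 - t l) ^ lam₂ * |x - t l| ^ (α - 1)) *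
        vdm N (2 * lam) t * esym N p (fun l => x - t l)

/-- The Laguerre auxiliary Selberg-type integral `L_p(x)` with weight
`t^{λa} e^{-λt}` (i.e. `t^{aβ/2} e^{-βt/2}` with `β = 2λ`), Vandermonde exponent `2λ`
and parameter `α`. -/
def Laux (N : ℕ) (lam α a : ℝ) (p : ℕ) (x : ℝ) : ℝ :=
  ((p.factorial : ℝ) * ((N - p).factorial : ℝ) / (N.factorial : ℝ)) *
    ∫ t in posOrthant N,
      (∏ l, t l ^ (lam * a) * Real.exp (-lam * t l) * |x - t l| ^ (α - 1)) *
        vdm N (2 * lam) t * esym N p (fun l => x - t l)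

open Real Set Topology Pointwise Asymptotics

lemma vdm_smul {n : ℕ} {γ c : ℝ} (hc : 0 ≤ c) (t : Fin n → ℝ) :
    vdm n γ (c • t) = c ^ (γ * n.choose 2) * vdm n γ t := by
  have hpair (q : Fin n × Fin n) :
      |(c • t) q.2 - (c • t) q.1| ^ γ = c ^ γ * |t q.2 - t q.1| ^ γ := by
    rw [Pi.smul_apply, Pi.smul_apply, smul_eq_mul, smul_eq_mul, ← mul_sub, abs_mul,
      abs_of_nonneg hc, mul_rpow hc (abs_nonneg _)]
  rw [vdm, vdm, prod_congr rfl fun q _ => hpair q, prod_mul_distrib, prod_const,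
    Fintype.card_product_filter_lt, Fintype.card_fin, ← rpow_natCast, ← rpow_mul hc]

lemma esym_smul (n p : ℕ) (c : ℝ) (t : Fin n → ℝ) :
    esym n p (c • t) = c ^ p * esym n p t := by
  rw [esym, esym, mul_sum]
  refine sum_congr rfl fun s hs => ?_
  rw [← (mem_powersetCard.mp hs).2, ← prod_const, ← prod_mul_distrib]
  rfl

lemma abs_esym_le (n p : ℕ) (t : Fin n → ℝ) : |esym n p t| ≤ ∏ l, (1 + |t l|) := by
  calc |esym n p t| ≤ ∑ s ∈ univ.powersetCard p, ∏ j ∈ s, |t j| := by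
        rw [esym]
        refine (abs_sum_le_sum_abs _ _).trans_eq (sum_congr rfl fun s _ => abs_prod _ _)
    _ ≤ ∑ s ∈ univ.powerset, ∏ j ∈ s, |t j| :=
        sum_le_sum_of_subset_of_nonneg (powersetCard_eq_filter ▸ filter_subset _ _)
          fun s _ _ => prod_nonneg fun j _ => abs_nonneg _
    _ = ∏ l, (1 + |t l|) := prod_one_add _ |>.symm

lemma vdm_nonneg (n : ℕ) (γ : ℝ) (t : Fin n → ℝ) : 0 ≤ vdm n γ t :=
  prod_nonneg fun _ _ => rpow_nonneg (abs_nonneg _) _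

lemma vdm_le (n : ℕ) {γ : ℝ} (hγ : 0 ≤ γ) (t : Fin n → ℝ) :
    vdm n γ t ≤ ∏ l, (1 + |t l|) ^ (γ * n.choose 2) := by
  classical
  have hone (l : Fin n) : 1 ≤ 1 + |t l| := le_add_of_nonneg_right (abs_nonneg _)
  have hnonneg (l : Fin n) : 0 ≤ 1 + |t l| := zero_le_one.trans (hone l)
  have hpair (q : Fin n × Fin n) (hq : q.1 < q.2) : |t q.2 - t q.1| ≤ ∏ l, (1 + |t l|) :=
    calc |t q.2 - t q.1| ≤ (1 + |t q.1|) * (1 + |t q.2|) := by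
          nlinarith [abs_sub (t q.2) (t q.1), abs_nonneg (t q.1), abs_nonneg (t q.2)]
      _ = ∏ l ∈ {q.1, q.2}, (1 + |t l|) := (prod_pair (f := fun l => 1 + |t l|) hq.ne).symm
      _ ≤ ∏ l, (1 + |t l|) :=
          prod_le_prod_of_subset_of_one_le (subset_univ _) (fun l _ => hnonneg l)
            fun l _ _ => hone l
  calc vdm n γ t
      ≤ ∏ _q ∈ univ.filter (fun q : Fin n × Fin n => q.1 < q.2), (∏ l, (1 + |t l|)) ^ γ :=
        prod_le_prod (fun q _ => rpow_nonneg (abs_nonneg _) _) fun q hq =>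
          rpow_le_rpow (abs_nonneg _) (hpair q (mem_filter.mp hq).2) hγ
    _ = ∏ l, (1 + |t l|) ^ (γ * n.choose 2) := by
        rw [prod_const, Fintype.card_product_filter_lt, Fintype.card_fin, ← rpow_natCast,
          ← rpow_mul (prod_nonneg fun l _ => hnonneg l),
          Real.finsetProd_rpow _ _ fun l _ => hnonneg l]

-- `Jaux` and `Laux` are, definitionally, the integrals of this function for the weights
-- `w u = u ^ λ₁ * (1 - u) ^ λ₂` and `w u = u ^ (λ a) * exp (-λ u)`.
def selbergIntegrand (N : ℕ) (lam α : ℝ) (p : ℕ) (w : ℝ → ℝ) (x : ℝ) (t : Fin N → ℝ) :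
    ℝ :=
  (∏ l, w (t l) * |x - t l| ^ (α - 1)) * vdm N (2 * lam) t * esym N p (fun l => x - t l)

section SelbergIntegrand

variable {N : ℕ} {lam α : ℝ} {p : ℕ}

lemma selbergIntegrand_smul (w : ℝ → ℝ) {c : ℝ} (hc : 0 < c) (x : ℝ) (t : Fin N → ℝ) :
    selbergIntegrand N lam α p w (c * x) (c • t) =
      c ^ ((α - 1) * N + 2 * lam * N.choose 2 + p) *
        selbergIntegrand N lam α p (fun u => w (c * u)) x t := by
  have hfac (l : Fin N) : w ((c • t) l) * |c * x - (c • t) l| ^ (α - 1) =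
      c ^ (α - 1) * (w (c * t l) * |x - t l| ^ (α - 1)) := by
    rw [Pi.smul_apply, smul_eq_mul, ← mul_sub, abs_mul, abs_of_pos hc,
      mul_rpow hc.le (abs_nonneg _)]
    ring
  have hdiff : (fun l => c * x - (c • t) l) = c • fun l => x - t l := by
    ext l; simp [mul_sub]
  rw [selbergIntegrand, selbergIntegrand, prod_congr rfl fun l _ => hfac l, prod_mul_distrib,
    prod_const, card_univ, Fintype.card_fin, vdm_smul hc.le, hdiff, esym_smul,
    rpow_add hc, rpow_add hc, ← rpow_natCast, ← rpow_natCast, ← rpow_mul hc.le]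
  ring

lemma selbergIntegrand_eq_pow_mul {w v : ℝ → ℝ} {k x : ℝ} {t : Fin N → ℝ}
    (h : ∀ l, w (t l) = k * v (t l)) :
    selbergIntegrand N lam α p w x t = k ^ N * selbergIntegrand N lam α p v x t := by
  simp only [selbergIntegrand, h, mul_assoc, prod_mul_distrib, prod_const, card_univ,
    Fintype.card_fin]

lemma abs_selbergIntegrand_le (hlam : 0 ≤ lam) (w : ℝ → ℝ) (x : ℝ) (t : Fin N → ℝ) :
    |selbergIntegrand N lam α p w x t| ≤
      ∏ l, |w (t l)| * |x - t l| ^ (α - 1) * (1 + |t l|) ^ (2 * lam * N.choose 2) *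
        (1 + |x - t l|) := by
  simp only [prod_mul_distrib]
  rw [selbergIntegrand, abs_mul, abs_mul, abs_prod, abs_of_nonneg (vdm_nonneg ..)]
  simp only [abs_mul, abs_of_nonneg (rpow_nonneg (abs_nonneg _) _), prod_mul_distrib]
  gcongr
  · exact vdm_le N (by positivity) t
  · exact abs_esym_le N p _

lemma measurable_selbergIntegrand {w : ℝ → ℝ} (hw : Measurable w) (x : ℝ) :
    Measurable (selbergIntegrand N lam α p w x) := by
  unfold selbergIntegrand vdm esym
  fun_prop

lemma tendsto_selbergIntegrand {ι : Type*} {l : Filter ι} {w : ι → ℝ → ℝ} {v : ℝ → ℝ}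
    (h : ∀ u, Tendsto (fun i => w i u) l (𝓝 (v u))) (x : ℝ) (t : Fin N → ℝ) :
    Tendsto (fun i => selbergIntegrand N lam α p (w i) x t) l
      (𝓝 (selbergIntegrand N lam α p v x t)) :=
  ((tendsto_finsetProd _ fun j _ => (h (t j)).mul_const _).mul_const _).mul_const _

end SelbergIntegrand

lemma one_sub_div_rpow_le_exp {lam r u : ℝ} (hlam : 0 ≤ lam) (hr : 0 < r) (hu : u ≤ r) :
    (1 - u / r) ^ (lam * r) ≤ exp (-lam * u) :=
  calc (1 - u / r) ^ (lam * r) ≤ exp (-(u / r)) ^ (lam * r) := by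
        gcongr
        · rwa [sub_nonneg, div_le_one hr]
        · linarith [add_one_le_exp (-(u / r))]
    _ = exp (-lam * u) := by
        rw [← exp_mul]; field_simp

lemma tendsto_one_sub_div_rpow_exp {lam : ℝ} (hlam : 0 < lam) (u : ℝ) :
    Tendsto (fun n : ℕ => (1 - u / n) ^ (lam * n)) atTop (𝓝 (exp (-lam * u))) := by
  refine ((tendsto_one_add_div_rpow_exp (-lam * u)).comp
    (tendsto_natCast_atTop_atTop.const_mul_atTop hlam)).congr fun n => ?_
  rcases eq_or_ne (n : ℝ) 0 with hn | hn
  · simp [hn]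
  · simp only [Function.comp_apply]
    congr 1
    field_simp
    ring

def openCube (N : ℕ) (r : ℝ) : Set (Fin N → ℝ) := univ.pi fun _ => Ioo 0 r

lemma measurableSet_openCube (N : ℕ) (r : ℝ) : MeasurableSet (openCube N r) :=
  MeasurableSet.univ_pi fun _ => measurableSet_Ioo

lemma openCube_subset_posOrthant (N : ℕ) (r : ℝ) : openCube N r ⊆ posOrthant N :=
  pi_mono fun _ _ => Ioo_subset_Ioi_self

lemma measurableSet_posOrthant (N : ℕ) : MeasurableSet (posOrthant N) :=
  MeasurableSet.univ_pi fun _ => measurableSet_Ioi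

lemma eventually_mem_openCube {N : ℕ} {s : Fin N → ℝ} (hs : s ∈ posOrthant N) :
    ∀ᶠ n : ℕ in atTop, s ∈ openCube N n := by
  filter_upwards
    [eventually_all.2 fun l => tendsto_natCast_atTop_atTop.eventually_gt_atTop (s l)]
    with n hn l _ using ⟨hs l (mem_univ l), hn l⟩

lemma setIntegral_unitCube_eq {N : ℕ} (f : (Fin N → ℝ) → ℝ) {r : ℝ} (hr : 0 < r) :
    ∫ t in unitCube N, f t = (r ^ N)⁻¹ * ∫ s in openCube N r, f (r⁻¹ • s) := by
  have hcube : r⁻¹ • openCube N r = unitCube N := by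
    rw [openCube, smul_set_univ_pi]
    congr 1; ext1
    rw [Pi.smul_apply, ← Set.image_smul]
    simp only [smul_eq_mul]
    rw [image_mul_left_Ioo (inv_pos.2 hr), mul_zero, inv_mul_cancel₀ hr.ne']
  rw [Measure.setIntegral_comp_smul_of_pos _ _ _ (inv_pos.2 hr), hcube, Module.finrank_fin_fun,
    smul_eq_mul, inv_pow, inv_inv, inv_mul_cancel_left₀ (by positivity)]

lemma rpow_mul_Jaux_div_eq {N : ℕ} {lam α b r : ℝ} {p : ℕ} (hr : 0 < r) (x : ℝ) :
    r ^ ((N : ℝ) * (b + α) + lam * N * (N - 1) + p) * Jaux N lam α b (lam * r) p (x / r) =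
      (p.factorial * (N - p).factorial / N.factorial : ℝ) *
        ∫ s in openCube N r,
          selbergIntegrand N lam α p (fun u => u ^ b * (1 - u / r) ^ (lam * r)) x s := by
  set K : ℝ := r⁻¹ ^ ((α - 1) * N + 2 * lam * N.choose 2 + p) * (r⁻¹ ^ b) ^ N
  have hintegrand : ∀ s ∈ openCube N r,
      selbergIntegrand N lam α p (fun u => u ^ b * (1 - u) ^ (lam * r)) (r⁻¹ * x) (r⁻¹ • s) =
        K * selbergIntegrand N lam α p (fun u => u ^ b * (1 - u / r) ^ (lam * r)) x s := by
    intro s hs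
    have hweight : ∀ l, (r⁻¹ * s l) ^ b * (1 - r⁻¹ * s l) ^ (lam * r) =
        r⁻¹ ^ b * (s l ^ b * (1 - s l / r) ^ (lam * r)) := fun l => by
      rw [mul_rpow (inv_pos.2 hr).le (hs l (mem_univ l)).1.le, inv_mul_eq_div]
      ring
    rw [selbergIntegrand_smul _ (inv_pos.2 hr),
      selbergIntegrand_eq_pow_mul (v := fun u => u ^ b * (1 - u / r) ^ (lam * r)) hweight]
    ring
  -- the exponents cancel because `2 * N.choose 2 = N * (N - 1)`
  have hK : r ^ ((N : ℝ) * (b + α) + lam * N * (N - 1) + p) * ((r ^ N)⁻¹ * K) = 1 := by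
    have hinv (y : ℝ) : r⁻¹ ^ y = r ^ (-y) := by rw [inv_rpow hr.le, rpow_neg hr.le]
    simp only [K]
    rw [hinv, hinv, ← rpow_natCast (r ^ (-b)), ← rpow_mul hr.le, ← rpow_natCast r N,
      ← rpow_neg hr.le, ← rpow_add hr, ← rpow_add hr, ← rpow_add hr, Nat.cast_choose_two]
    convert rpow_zero r using 2
    ring
  change _ * (_ * ∫ t in unitCube N, selbergIntegrand N lam α p
    (fun u => u ^ b * (1 - u) ^ (lam * r)) (x / r) t) = _
  rw [setIntegral_unitCube_eq _ hr, div_eq_inv_mul x r,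
    setIntegral_congr_fun (measurableSet_openCube N r) hintegrand, integral_const_mul,
    mul_left_comm]
  congr 1
  rw [← mul_assoc _ K, ← mul_assoc, hK, one_mul]

lemma intervalIntegrable_abs_sub_rpow {r : ℝ} (hr : -1 < r) (x a b : ℝ) :
    IntervalIntegrable (fun u => |x - u| ^ r) volume a b := by
  have hpos (c : ℝ) (hc : 0 ≤ c) : IntervalIntegrable (fun v : ℝ => |v| ^ r) volume 0 c := by
    refine (intervalIntegral.intervalIntegrable_rpow' hr).congr fun v hv => ?_
    rw [uIoc_of_le hc] at hv
    rw [abs_of_pos hv.1]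
  have hall (c : ℝ) : IntervalIntegrable (fun v : ℝ => |v| ^ r) volume 0 c := by
    rcases le_total 0 c with hc | hc
    · exact hpos c hc
    · rw [IntervalIntegrable.iff_comp_neg]
      simpa using hpos (-c) (neg_nonneg.2 hc)
  simpa using ((hall (x - a)).symm.trans (hall (x - b))).comp_sub_left x

lemma isTheta_const_add_abs_sub_atTop (c d : ℝ) : (fun u : ℝ => c + |u - d|) =Θ[atTop] id := by
  refine EventuallyEq.trans_isTheta ?_
    (IsEquivalent.refl.add_isLittleO (isLittleO_const_id_atTop (c - d))).isTheta
  filter_upwards [eventually_ge_atTop d] with u hu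
  simp only [abs_of_nonneg (sub_nonneg.2 hu), Pi.add_apply, id]
  ring

def laguerreMajorant (lam α b M x u : ℝ) : ℝ :=
  u ^ b * exp (-lam * u) * |x - u| ^ (α - 1) * (1 + |u|) ^ M * (1 + |x - u|)

lemma laguerreMajorant_isBigO_exp {lam α b M : ℝ} (hlam : 0 < lam) (hM : 0 ≤ M) (x : ℝ) :
    laguerreMajorant lam α b M x =O[atTop] fun u => exp (-(lam / 2) * u) := by
  have hdist : (fun u => |x - u|) =Θ[atTop] id := by
    simpa [abs_sub_comm] using isTheta_const_add_abs_sub_atTop 0 x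
  have hpoly : laguerreMajorant lam α b M x =O[atTop]
      fun u => u ^ b * exp (-lam * u) * id u ^ (α - 1) * id u ^ M * id u :=
    ((((isBigO_refl _ _).mul (isBigO_refl _ _)).mul
      (hdist.rpow (Eventually.of_forall fun _ => abs_nonneg _) (eventually_ge_atTop 0)).isBigO).mul
      (((isTheta_const_add_abs_sub_atTop 1 0).isBigO.rpow hM (eventually_ge_atTop 0)).congr_left
        fun u => by simp)).mul
      ((isTheta_const_add_abs_sub_atTop 1 x).isBigO.congr_left fun u => by simp [abs_sub_comm])
  have hdecay : (fun u => u ^ (b + (α - 1) + M + 1) * exp (-(lam / 2) * u) *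
      exp (-(lam / 2) * u)) =O[atTop] fun u => exp (-(lam / 2) * u) := by
    simpa using
      ((tendsto_rpow_mul_exp_neg_mul_atTop_nhds_zero _ _ (half_pos hlam)).isBigO_one ℝ).mul
        (isBigO_refl (fun u => exp (-(lam / 2) * u)) atTop)
  refine hpoly.trans (hdecay.congr' ?_ EventuallyEq.rfl)
  filter_upwards [eventually_gt_atTop 0] with u hu
  rw [mul_assoc, ← exp_add, rpow_add hu, rpow_add hu, rpow_add hu, rpow_one,
    show -(lam / 2) * u + -(lam / 2) * u = -lam * u by ring]
  simp only [id]
  ring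

lemma integrableOn_Ioi_laguerreMajorant {lam α b M x : ℝ} (hlam : 0 < lam) (hα : 0 < α)
    (hb : -1 < b) (hM : 0 ≤ M) (hx : 0 < x) :
    IntegrableOn (laguerreMajorant lam α b M x) (Ioi 0) := by
  have hsplit : Ioi (0 : ℝ) = Ioc 0 (x / 2) ∪ Ioc (x / 2) (2 * x) ∪ Ioi (2 * x) := by
    rw [Set.Ioc_union_Ioc_eq_Ioc (by positivity) (by linarith),
      Ioc_union_Ioi_eq_Ioi (by positivity)]
  rw [hsplit]
  refine (IntegrableOn.union ?_ ?_).union ?_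
  · have h := (intervalIntegral.intervalIntegrable_rpow' hb (a := 0) (b := x / 2)).mul_continuousOn
      (g := fun u => exp (-lam * u) * |x - u| ^ (α - 1) * (1 + |u|) ^ M * (1 + |x - u|))
      (continuousOn_of_forall_continuousAt fun u hu => ?_)
    · rw [intervalIntegrable_iff_integrableOn_Ioc_of_le (by positivity)] at h
      exact h.congr_fun (fun u _ => by simp only [laguerreMajorant]; ring) measurableSet_Ioc
    · rw [Set.uIcc_of_le (by positivity)] at hu
      have hxu : |x - u| ≠ 0 := abs_ne_zero.2 (by linarith [hu.2])
      fun_prop (disch := left; first | assumption | positivity)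
  · have h := (intervalIntegrable_abs_sub_rpow (r := α - 1) (by linarith) x (x / 2)
      (2 * x)).mul_continuousOn
      (g := fun u => u ^ b * exp (-lam * u) * (1 + |u|) ^ M * (1 + |x - u|))
      (continuousOn_of_forall_continuousAt fun u hu => ?_)
    · rw [intervalIntegrable_iff_integrableOn_Ioc_of_le (by linarith)] at h
      exact h.congr_fun (fun u _ => by simp only [laguerreMajorant]; ring) measurableSet_Ioc
    · rw [Set.uIcc_of_le (by linarith)] at hu
      have hu0 : u ≠ 0 := by linarith [hu.1]
      fun_prop (disch := left; first | assumption | positivity)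
  · refine integrable_of_isBigO_exp_neg (half_pos hlam)
      (continuousOn_of_forall_continuousAt fun u (hu : 2 * x ≤ u) => ?_)
      (laguerreMajorant_isBigO_exp hlam hM x)
    have hu0 : u ≠ 0 := by linarith
    have hxu : |x - u| ≠ 0 := abs_ne_zero.2 (by linarith)
    unfold laguerreMajorant
    fun_prop (disch := left; first | assumption | positivity)

lemma abs_selbergIntegrand_le_prod_laguerreMajorant {N : ℕ} {lam α b r x : ℝ} {p : ℕ}
    (hlam : 0 ≤ lam) {s : Fin N → ℝ} (hs : s ∈ openCube N r) :
    |selbergIntegrand N lam α p (fun u => u ^ b * (1 - u / r) ^ (lam * r)) x s| ≤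
      ∏ l, laguerreMajorant lam α b (2 * lam * N.choose 2) x (s l) := by
  refine (abs_selbergIntegrand_le hlam _ x s).trans (prod_le_prod (fun l _ => by positivity)
    fun l _ => ?_)
  obtain ⟨hl0, hlr⟩ := hs l (mem_univ l)
  have hweight : |s l ^ b * (1 - s l / r) ^ (lam * r)| ≤ s l ^ b * exp (-lam * s l) := by
    rw [abs_of_nonneg (mul_nonneg (rpow_nonneg hl0.le _)
      (rpow_nonneg (sub_nonneg.2 ((div_le_one (hl0.trans hlr)).2 hlr.le)) _))]
    exact mul_le_mul_of_nonneg_left (one_sub_div_rpow_le_exp hlam (hl0.trans hlr) hlr.le)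
      (rpow_nonneg hl0.le _)
  unfold laguerreMajorant
  gcongr

lemma tendsto_setIntegral_openCube_selbergIntegrand {N : ℕ} {lam α b x : ℝ} {p : ℕ}
    (hlam : 0 < lam) (hα : 0 < α) (hb : -1 < b) (hx : 0 < x) :
    Tendsto (fun n : ℕ => ∫ s in openCube N n,
        selbergIntegrand N lam α p (fun u => u ^ b * (1 - u / n) ^ (lam * n)) x s) atTop
      (𝓝 (∫ s in posOrthant N,
        selbergIntegrand N lam α p (fun u => u ^ b * exp (-lam * u)) x s)) := by
  have hmajorant_nonneg (u : ℝ) :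
      0 ≤ (Set.Ioi 0).indicator (laguerreMajorant lam α b (2 * lam * N.choose 2) x) u :=
    indicator_nonneg (fun u (hu : 0 < u) => by unfold laguerreMajorant; positivity) u
  simp only [← integral_indicator, measurableSet_openCube, measurableSet_posOrthant]
  refine tendsto_integral_filter_of_dominated_convergence
    (fun s => ∏ l, (Set.Ioi 0).indicator (laguerreMajorant lam α b (2 * lam * N.choose 2) x)
      (s l))
    (Eventually.of_forall fun n => ((measurable_selbergIntegrand (by fun_prop) x).indicator
      (measurableSet_openCube N n)).aestronglyMeasurable)
    (Eventually.of_forall fun n => Eventually.of_forall fun s => ?_)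
    (Integrable.fintype_prod fun _ => (integrable_indicator_iff measurableSet_Ioi).2
      (integrableOn_Ioi_laguerreMajorant hlam hα hb (by positivity) hx))
    (Eventually.of_forall fun s => ?_)
  · by_cases hs : s ∈ openCube N n
    · rw [indicator_of_mem hs, Real.norm_eq_abs]
      refine (abs_selbergIntegrand_le_prod_laguerreMajorant hlam.le hs).trans_eq
        (prod_congr rfl fun l _ => (indicator_of_mem (hs l (mem_univ l)).1 _).symm)
    · rw [indicator_of_notMem hs, norm_zero]
      exact prod_nonneg fun l _ => hmajorant_nonneg _
  · by_cases hs : s ∈ posOrthant N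
    · rw [indicator_of_mem hs]
      refine Tendsto.congr' ((eventually_mem_openCube hs).mono fun n hn =>
        (indicator_of_mem hn _).symm) (tendsto_selbergIntegrand (fun u => ?_) x s)
      exact tendsto_const_nhds.mul (tendsto_one_sub_div_rpow_exp hlam u)
    · simp only [indicator_of_notMem hs,
        indicator_of_notMem fun h => hs (openCube_subset_posOrthant N _ h), tendsto_const_nhds]

theorem laguerre_limit_of_jacobi_general (N : ℕ) (lam α a : ℝ)
    (hlam : 0 < lam) (hα : 0 < α) (ha : -1 < lam * a) (p : ℕ)
    (x : ℝ) (hx : 0 < x) :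
    Tendsto
      (fun n : ℕ =>
        (n : ℝ) ^ ((N : ℝ) * (lam * a + α) + lam * (N : ℝ) * ((N : ℝ) - 1) + (p : ℝ)) *
          Jaux N lam α (lam * a) (lam * (n : ℝ)) p (x / (n : ℝ)))
      atTop (nhds (Laux N lam α a p x)) := by
  refine ((tendsto_setIntegral_openCube_selbergIntegrand (p := p) hlam hα ha hx).const_mul
    _).congr' ?_
  filter_upwards [eventually_gt_atTop 0] with n hn
  exact (rpow_mul_Jaux_div_eq (Nat.cast_pos.2 hn) x).symm

/-- The Laguerre auxiliary integral is the limit of rescaled Jacobi auxiliary integrals: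
`L_p(x) = lim_{n→∞} n^{N(λa+α)+λN(N-1)+p} I_p(x/n)` with `λ₁ = λa`, `λ₂ = λn`. -/
theorem laguerre_limit_of_jacobi (N : ℕ) (hN : 0 < N) (lam α a : ℝ)
    (hlam : 0 < lam) (hα : 0 < α) (ha : -1 < lam * a) (p : ℕ) (hp : p ≤ N)
    (x : ℝ) (hx : 0 < x) :
    Tendsto
      (fun n : ℕ =>
        (n : ℝ) ^ ((N : ℝ) * (lam * a + α) + lam * (N : ℝ) * ((N : ℝ) - 1) + (p : ℝ)) *
          Jaux N lam α (lam * a) (lam * (n : ℝ)) p (x / (n : ℝ)))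
      atTop (nhds (Laux N lam α a p x)) :=
  laguerre_limit_of_jacobi_general N lam α a hlam hα ha p x hx
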